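/- Let G be a group and let n, k be positive integers with 1 ≤ k ≤ n. Suppose that the quotient group G/γ_j(G) is torsion-free for all 1 ≤ j ≤ n. Then λ̄_n(G) ∩ γ_k(G) = N_{n,k}(G). -/

import Mathlib

/-- `H^m`: the subgroup generated by the `m`-th powers of elements of `H`. -/
def sPow {G : Type*} [Group G] (H : Subgroup G) (m : ℕ) : Subgroup G :=
  Subgroup.closure ((fun h => h ^ m) '' (H : Set G))

/-- `γ_n(G)`, the lower central series indexed so that `γ_1(G) = G`. -/
def gamma (G : Type*) [Group G] (n : ℕ) : Subgroup G :=
  Subgroup.lowerCentralSeries (⊤ : Subgroup G) (n - 1)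

/-- `N_{n,k}(G) = γ_k(G)^{4^{n-k}} ⋯ γ_n(G)` (product of normal subgroups = join). -/
def Nnk (G : Type*) [Group G] (n k : ℕ) : Subgroup G :=
  ⨆ i ∈ Finset.Icc k n, sPow (gamma G i) (4 ^ (n - i))

/-- The `λ̄`-series: `λ̄_1(G) = G`, `λ̄_{n+1}(G) = λ̄_n(G)^4 [λ̄_n(G), G]`. -/
def lambdaBar (G : Type*) [Group G] : ℕ → Subgroup G
  | 0 => ⊤
  | 1 => ⊤
  | (n + 2) => sPow (lambdaBar G (n + 1)) 4 ⊔ ⁅lambdaBar G (n + 1), (⊤ : Subgroup G)⁆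

/-- The lower `p`-central series: `λ_1(G) = G`, `λ_{n+1}(G) = λ_n(G)^p [λ_n(G), G]`. -/
def lowP (G : Type*) [Group G] (p : ℕ) : ℕ → Subgroup G
  | 0 => ⊤
  | 1 => ⊤
  | (n + 2) => sPow (lowP G p (n + 1)) p ⊔ ⁅lowP G p (n + 1), (⊤ : Subgroup G)⁆

/-- `Ω_i(G)`: subgroup generated by elements of order dividing `p^i`. -/
def Omega (G : Type*) [Group G] (p i : ℕ) : Subgroup G :=
  Subgroup.closure {x : G | x ^ p ^ i = 1}

/-- A finite `p`-group is `p`-central if `Ω_1(G) ≤ Z(G)` for odd `p`,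
resp. `Ω_2(G) ≤ Z(G)` for `p = 2`. -/
def IsPCentral (p : ℕ) (G : Type*) [Group G] : Prop :=
  if p = 2 then Omega G 2 2 ≤ Subgroup.center G else Omega G p 1 ≤ Subgroup.center G

instance gamma_normal (G : Type*) [Group G] (n : ℕ) : (gamma G n).Normal :=
  inferInstanceAs (Subgroup.lowerCentralSeries (⊤ : Subgroup G) (n - 1)).Normal

instance sPow_normal {G : Type*} [Group G] (H : Subgroup G) [hH : H.Normal] (m : ℕ) :
    (sPow H m).Normal := by
  constructor
  intro x hx g
  induction hx using Subgroup.closure_induction with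
  | mem y hy =>
    obtain ⟨h, hh, rfl⟩ := hy
    exact Subgroup.subset_closure ⟨g * h * g⁻¹, hH.conj_mem h hh g, by
      simp [conj_pow]⟩
  | one => simpa using (sPow H m).one_mem
  | mul a b _ _ ha hb =>
    have : g * (a * b) * g⁻¹ = (g * a * g⁻¹) * (g * b * g⁻¹) := by group
    rw [this]; exact (sPow H m).mul_mem ha hb
  | inv a _ ha =>
    have : g * a⁻¹ * g⁻¹ = (g * a * g⁻¹)⁻¹ := by group
    rw [this]; exact (sPow H m).inv_mem ha

theorem normal_iSup {G : Type*} [Group G] {ι : Sort*} (f : ι → Subgroup G)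
    (h : ∀ i, (f i).Normal) : (⨆ i, f i).Normal := by
  constructor
  intro x hx g
  refine Subgroup.iSup_induction f (C := fun y => g * y * g⁻¹ ∈ ⨆ i, f i) hx
    (fun i y hy => Subgroup.mem_iSup_of_mem i ((h i).conj_mem y hy g)) (by simpa using Subgroup.one_mem (⨆ i, f i)) ?_
  intro a b ha hb
  have : g * (a * b) * g⁻¹ = (g * a * g⁻¹) * (g * b * g⁻¹) := by group
  rw [this]; exact Subgroup.mul_mem _ ha hb

instance Nnk_normal (G : Type*) [Group G] (n k : ℕ) : (Nnk G n k).Normal :=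
  normal_iSup _ fun i => normal_iSup _ fun _ => inferInstance

instance lambdaBar_normal (G : Type*) [Group G] : ∀ n, (lambdaBar G n).Normal
  | 0 => inferInstanceAs (⊤ : Subgroup G).Normal
  | 1 => inferInstanceAs (⊤ : Subgroup G).Normal
  | (n + 2) => by
    haveI := lambdaBar_normal G (n + 1)
    exact inferInstanceAs
      (sPow (lambdaBar G (n + 1)) 4 ⊔ ⁅lambdaBar G (n + 1), (⊤ : Subgroup G)⁆).Normal

instance lowP_normal (G : Type*) [Group G] (p : ℕ) : ∀ n, (lowP G p n).Normal
  | 0 => inferInstanceAs (⊤ : Subgroup G).Normal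
  | 1 => inferInstanceAs (⊤ : Subgroup G).Normal
  | (n + 2) => by
    haveI := lowP_normal G p (n + 1)
    exact inferInstanceAs
      (sPow (lowP G p (n + 1)) p ⊔ ⁅lowP G p (n + 1), (⊤ : Subgroup G)⁆).Normal

/-- The old Mathlib `Monoid.IsTorsionFree` (removed): no nontrivial element has finite order. -/
def Monoid.IsTorsionFree (G : Type*) [Monoid G] : Prop :=
  ∀ g : G, g ≠ 1 → ¬IsOfFinOrder g

/-!
Give `x ^ 2 ^ e`, for `x ∈ γ_i`, the weight `2 i + e`, and let `W_{t,m}` be generated by the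
elements of weight `≥ t` coming from `γ_m, γ_{m+1}, …`, together with `γ_n`. Downward induction
on `i + j` gives `[W_{s,i}, W_{t,j}] ≤ W_{s+t,i+j}`, and that squaring raises the weight by one.
Hence `λ̄_n ≤ W_{2n,1} ≤ N_{n,1}`, and `x ↦ x ^ 4 ^ (n-k)` is a homomorphism on `γ_k` modulo
`N_{n,k+1}`. So modulo `N_{n,k+1}` an element of `N_{n,k}` is a single power `h ^ 4 ^ (n-k)` with
`h ∈ γ_k`; if the element lies in `γ_{k+1}`, torsion-freeness of `G/γ_{k+1}` gives `h ∈ γ_{k+1}`,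
so the element lies in `N_{n,k+1}`. Induction on `k` yields `λ̄_n ∩ γ_k ≤ N_{n,k}`; the reverse
inclusion is immediate from `γ_i ≤ λ̄_i`.
-/

open scoped commutatorElement

open Subgroup

section GroupLemmas

variable {G : Type*} [Group G]

theorem Subgroup.commutator_commutator_le_of_rotate {A B C N : Subgroup G} [N.Normal]
    (h₁ : ⁅⁅B, C⁆, A⁆ ≤ N) (h₂ : ⁅⁅C, A⁆, B⁆ ≤ N) : ⁅⁅A, B⁆, C⁆ ≤ N := by
  let f := QuotientGroup.mk' N
  have key : ∀ X Y Z : Subgroup G, ⁅⁅X, Y⁆, Z⁆ ≤ N ↔ ⁅⁅X.map f, Y.map f⁆, Z.map f⁆ = ⊥ := by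
    intro X Y Z
    rw [← map_commutator, ← map_commutator, map_eq_bot_iff, QuotientGroup.ker_mk']
  rw [key]
  exact commutator_commutator_eq_bot_of_rotate ((key _ _ _).1 h₁) ((key _ _ _).1 h₂)

theorem Subgroup.commutator_closure_le {S T : Set G} {N : Subgroup G} [N.Normal]
    (h : ∀ s ∈ S, ∀ t ∈ T, ⁅s, t⁆ ∈ N) : ⁅closure S, closure T⁆ ≤ N := by
  let f := QuotientGroup.mk' N
  suffices ⁅(closure S).map f, (closure T).map f⁆ = ⊥ by
    rwa [← map_commutator, map_eq_bot_iff, QuotientGroup.ker_mk'] at this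
  rw [commutator_eq_bot_iff_le_centralizer, MonoidHom.map_closure, MonoidHom.map_closure,
    centralizer_closure, closure_le]
  rintro _ ⟨s, hs, rfl⟩ _ ⟨t, ht, rfl⟩
  have hst : f ⁅s, t⁆ = 1 := (QuotientGroup.eq_one_iff _).2 (h s hs t ht)
  rw [map_commutatorElement, commutatorElement_eq_one_iff_mul_comm] at hst
  exact hst.symm

theorem Subgroup.normal_closure_of_conj_mem {S : Set G}
    (h : ∀ g : G, ∀ x ∈ S, g * x * g⁻¹ ∈ S) : (closure S).Normal :=
  ⟨fun _ hx g => (closure_le (K := (closure S).comap (MulAut.conj g).toMonoidHom)).2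
    (fun y hy => subset_closure (h g y hy)) hx⟩

theorem mem_of_pow_mem_of_isTorsionFree {N : Subgroup G} [N.Normal]
    (htf : Monoid.IsTorsionFree (G ⧸ N)) {q : ℕ} (hq : q ≠ 0) {x : G} (hx : x ^ q ∈ N) :
    x ∈ N := by
  by_contra hxN
  refine htf _ (mt (QuotientGroup.eq_one_iff x).1 hxN)
    (isOfFinOrder_iff_pow_eq_one.2 ⟨q, Nat.pos_of_ne_zero hq, ?_⟩)
  rwa [← QuotientGroup.mk_pow, QuotientGroup.eq_one_iff]

end GroupLemmas

section LowerCentralSeries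

variable {G : Type*} [Group G]

theorem commutator_lowerCentralSeries_le (a b : ℕ) :
    ⁅(⊤ : Subgroup G).lowerCentralSeries a, (⊤ : Subgroup G).lowerCentralSeries b⁆ ≤
      (⊤ : Subgroup G).lowerCentralSeries (a + b + 1) := by
  induction b generalizing a with
  | zero => exact le_rfl
  | succ b ih =>
    rw [Subgroup.lowerCentralSeries_succ, commutator_comm]
    apply commutator_commutator_le_of_rotate
    · rw [commutator_comm ⊤, ← Subgroup.lowerCentralSeries_succ]
      exact (ih (a + 1)).trans (Subgroup.lowerCentralSeries_antitone _ (by omega))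
    · refine (commutator_mono (ih a) le_top).trans ?_
      rw [← Subgroup.lowerCentralSeries_succ]
      exact Subgroup.lowerCentralSeries_antitone _ (by omega)

theorem gamma_antitone : Antitone (gamma G) :=
  fun _ _ h => Subgroup.lowerCentralSeries_antitone _ (Nat.sub_le_sub_right h 1)

theorem commutator_gamma_le (i j : ℕ) : ⁅gamma G i, gamma G j⁆ ≤ gamma G (i + j) :=
  (commutator_lowerCentralSeries_le _ _).trans (Subgroup.lowerCentralSeries_antitone _ (by omega))

end LowerCentralSeries

section Powers

variable {G : Type*} [Group G]

theorem sPow_le_iff {H K : Subgroup G} {m : ℕ} : sPow H m ≤ K ↔ ∀ x ∈ H, x ^ m ∈ K := by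
  rw [sPow, closure_le, Set.image_subset_iff]
  rfl

theorem pow_mem_sPow {H : Subgroup G} {x : G} (hx : x ∈ H) (m : ℕ) : x ^ m ∈ sPow H m :=
  subset_closure ⟨x, hx, rfl⟩

theorem exists_pow_mul_of_mem_sPow {H N : Subgroup G} [N.Normal] {q : ℕ}
    (hcol : ∀ x ∈ H, ∀ y ∈ H, (x ^ q * y ^ q)⁻¹ * (x * y) ^ q ∈ N) {y : G}
    (hy : y ∈ sPow H q) : ∃ h ∈ H, ∃ z ∈ N, h ^ q * z = y := by
  induction hy using closure_induction with
  | mem _ hy =>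
    obtain ⟨h, hh, rfl⟩ := hy
    exact ⟨h, hh, 1, N.one_mem, mul_one _⟩
  | one => exact ⟨1, H.one_mem, 1, N.one_mem, by simp⟩
  | mul _ _ _ _ ih₁ ih₂ =>
    obtain ⟨h₁, hh₁, z₁, hz₁, rfl⟩ := ih₁
    obtain ⟨h₂, hh₂, z₂, hz₂, rfl⟩ := ih₂
    refine ⟨h₁ * h₂, H.mul_mem hh₁ hh₂,
      ((h₁ ^ q * h₂ ^ q)⁻¹ * (h₁ * h₂) ^ q)⁻¹ * ((h₂ ^ q)⁻¹ * z₁ * h₂ ^ q) * z₂, ?_, by group⟩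
    refine N.mul_mem (N.mul_mem (N.inv_mem (hcol _ hh₁ _ hh₂)) ?_) hz₂
    simpa using ‹N.Normal›.conj_mem _ hz₁ (h₂ ^ q)⁻¹
  | inv _ _ ih =>
    obtain ⟨h, hh, z, hz, rfl⟩ := ih
    refine ⟨h⁻¹, H.inv_mem hh, h ^ q * z⁻¹ * (h ^ q)⁻¹, ?_, by group⟩
    exact ‹N.Normal›.conj_mem _ (N.inv_mem hz) _

end Powers

section LambdaBar

variable {G : Type*} [Group G]

theorem sPow_lambdaBar_le : ∀ m, sPow (lambdaBar G m) 4 ≤ lambdaBar G (m + 1)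
  | 0 => le_top
  | _ + 1 => le_sup_left

theorem commutator_lambdaBar_le : ∀ m, ⁅lambdaBar G m, ⊤⁆ ≤ lambdaBar G (m + 1)
  | 0 => le_top
  | _ + 1 => le_sup_right

theorem gamma_le_lambdaBar : ∀ i, gamma G i ≤ lambdaBar G i
  | 0 | 1 => le_top
  | i + 2 => (commutator_mono (gamma_le_lambdaBar (i + 1)) le_rfl).trans
      (commutator_lambdaBar_le (i + 1))

theorem pow_four_pow_mem_lambdaBar {m : ℕ} {x : G} (hx : x ∈ lambdaBar G m) (j : ℕ) :
    x ^ 4 ^ j ∈ lambdaBar G (m + j) := by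
  induction j with
  | zero => simpa using hx
  | succ j ih =>
    rw [pow_succ, pow_mul]
    exact sPow_lambdaBar_le _ (pow_mem_sPow ih 4)

end LambdaBar

section WeightFiltration

variable (G : Type*) [Group G]

/-- `W_{t,m}` of the header, with `γ_C` in place of `γ_n`; this truncation makes downward induction
on the level possible. -/
def weightFiltration (C t m : ℕ) : Subgroup G :=
  closure ({y | ∃ i e, m ≤ i ∧ t ≤ 2 * i + e ∧ ∃ x ∈ gamma G i, x ^ 2 ^ e = y} ∪ gamma G C)

variable {G}

instance weightFiltration_normal (C t m : ℕ) : (weightFiltration G C t m).Normal := by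
  refine normal_closure_of_conj_mem fun g y hy => ?_
  rcases hy with ⟨i, e, hi, he, x, hx, rfl⟩ | hy
  · exact Or.inl ⟨i, e, hi, he, g * x * g⁻¹, (gamma_normal G i).conj_mem x hx g, conj_pow⟩
  · exact Or.inr ((gamma_normal G C).conj_mem y hy g)

theorem pow_mem_weightFiltration {C t m i e : ℕ} (hi : m ≤ i) (he : t ≤ 2 * i + e) {x : G}
    (hx : x ∈ gamma G i) : x ^ 2 ^ e ∈ weightFiltration G C t m :=
  subset_closure (Or.inl ⟨i, e, hi, he, x, hx, rfl⟩)

theorem mem_weightFiltration {C t m i : ℕ} (hi : m ≤ i) (ht : t ≤ 2 * i) {x : G}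
    (hx : x ∈ gamma G i) : x ∈ weightFiltration G C t m := by
  simpa using pow_mem_weightFiltration (e := 0) hi ht hx

theorem gamma_le_weightFiltration {C t m : ℕ} : gamma G C ≤ weightFiltration G C t m :=
  fun _ hx => subset_closure (Or.inr hx)

theorem weightFiltration_anti {C t t' m m' : ℕ} (ht : t ≤ t') (hm : m ≤ m') :
    weightFiltration G C t' m' ≤ weightFiltration G C t m := by
  refine closure_mono (Set.union_subset_union_left _ ?_)
  rintro _ ⟨i, e, hi, he, x, hx, rfl⟩
  exact ⟨i, e, hm.trans hi, ht.trans he, x, hx, rfl⟩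

theorem weightFiltration_le_gamma {C t m : ℕ} :
    weightFiltration G C t m ≤ gamma G (min m C) := by
  rw [weightFiltration, closure_le]
  rintro _ (⟨i, e, hi, -, x, hx, rfl⟩ | hx)
  · exact gamma_antitone (min_le_of_left_le hi) (Subgroup.pow_mem _ hx _)
  · exact gamma_antitone (min_le_right _ _) hx

theorem weightFiltration_eq_top {C t : ℕ} (ht : t ≤ 2) : weightFiltration G C t 1 = ⊤ :=
  eq_top_iff.2 fun x _ => mem_weightFiltration le_rfl ht (mem_top x)

variable (G) in
def CommutatorEstimate (C L : ℕ) : Prop :=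
  ∀ i j s t, 1 ≤ i → 1 ≤ j → L ≤ i + j →
    ⁅weightFiltration G C s i, weightFiltration G C t j⁆ ≤ weightFiltration G C (s + t) (i + j)

theorem commutatorEstimate_succ {C : ℕ} : CommutatorEstimate G C (C + 1) := by
  intro i j s t _ _ hij
  refine le_trans ?_ gamma_le_weightFiltration
  calc ⁅weightFiltration G C s i, weightFiltration G C t j⁆
      ≤ ⁅gamma G (min i C), gamma G (min j C)⁆ :=
        commutator_mono weightFiltration_le_gamma weightFiltration_le_gamma
    _ ≤ gamma G (min i C + min j C) := commutator_gamma_le _ _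
    _ ≤ gamma G C := gamma_antitone (by omega)

namespace CommutatorEstimate

variable {C L : ℕ}

theorem mono {L' : ℕ} (h : CommutatorEstimate G C L) (hL : L ≤ L') :
    CommutatorEstimate G C L' :=
  fun i j s t hi hj hij => h i j s t hi hj (hL.trans hij)

theorem sq_mem {m t : ℕ} (hM : CommutatorEstimate G C (m + 1)) (hm : 1 ≤ m) (ht : 1 ≤ t)
    {w : G} (hw : w ∈ weightFiltration G C t m) : w ^ 2 ∈ weightFiltration G C (t + 1) m := by
  have hcomm : ⁅weightFiltration G C t m, weightFiltration G C t m⁆ ≤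
      weightFiltration G C (t + 1) m :=
    (hM m m t t hm hm (by omega)).trans (weightFiltration_anti (by omega) (by omega))
  induction hw using closure_induction with
  | mem _ hy =>
    rcases hy with ⟨i, e, hi, he, x, hx, rfl⟩ | hy
    · rw [← pow_mul, ← pow_succ]
      exact pow_mem_weightFiltration hi (by omega) hx
    · exact gamma_le_weightFiltration (pow_mem hy 2)
  | one => simp
  | mul g y hg hy ihg ihy =>
    have hsq : (g * y) ^ 2 = g ^ 2 * ⁅g⁻¹, y⁆ * y ^ 2 := by
      simp only [pow_two, commutatorElement_def]; group
    rw [hsq]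
    exact mul_mem (mul_mem ihg (hcomm (commutator_mem_commutator (inv_mem hg) hy))) ihy
  | inv g _ ih => simpa using inv_mem ih

theorem commutator_two_pow_left_mem {i m τ : ℕ} (hM : CommutatorEstimate G C (m + 1))
    (hi : 1 ≤ i) (hm : 1 ≤ m) (hτ : 1 ≤ τ) {x v : G} (hx : x ∈ gamma G i)
    (hv : ⁅x, v⁆ ∈ weightFiltration G C τ m) (a : ℕ) :
    ⁅x ^ 2 ^ a, v⁆ ∈ weightFiltration G C (τ + a) m := by
  induction a with
  | zero => simpa using hv
  | succ a ih =>
    set u := x ^ 2 ^ a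
    have hu : u ∈ weightFiltration G C (2 * i + a) i := pow_mem_weightFiltration le_rfl le_rfl hx
    have hid : ⁅u ^ 2, v⁆ = ⁅u, ⁅u, v⁆⁆ * ⁅u, v⁆ ^ 2 := by
      simp only [pow_two, commutatorElement_def]; group
    rw [pow_succ, pow_mul, hid]
    refine mul_mem ?_ ?_
    · exact weightFiltration_anti (by omega) (by omega)
        (hM i m _ _ hi hm (by omega) (commutator_mem_commutator hu ih))
    · exact hM.sq_mem (t := τ + a) hm (by omega) ih

theorem commutator_two_pow_mem {i j : ℕ} (hM : CommutatorEstimate G C (i + j + 1))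
    (hi : 1 ≤ i) (hj : 1 ≤ j) {x y : G} (hx : x ∈ gamma G i) (hy : y ∈ gamma G j) (a b : ℕ) :
    ⁅x ^ 2 ^ a, y ^ 2 ^ b⁆ ∈ weightFiltration G C (2 * i + 2 * j + a + b) (i + j) := by
  have hyx : ⁅y, x⁆ ∈ weightFiltration G C (2 * i + 2 * j) (i + j) :=
    mem_weightFiltration le_rfl (by omega)
      (add_comm j i ▸ commutator_gamma_le j i (commutator_mem_commutator hy hx))
  have hxy : ⁅x, y ^ 2 ^ b⁆ ∈ weightFiltration G C (2 * i + 2 * j + b) (i + j) := by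
    rw [← commutatorElement_inv]
    exact inv_mem (hM.commutator_two_pow_left_mem hj (by omega) (by omega) hy hyx b)
  exact weightFiltration_anti (by omega) le_rfl
    (hM.commutator_two_pow_left_mem hi (by omega) (by omega) hx hxy a)

theorem of_succ (hM : CommutatorEstimate G C (L + 1)) : CommutatorEstimate G C L := by
  intro i j s t hi hj hij
  rcases hij.lt_or_eq with hij | rfl
  · exact hM i j s t hi hj hij
  refine commutator_closure_le fun g hg h hh => ?_
  rcases hg with ⟨p, a, hip, hs, x, hx, rfl⟩ | hg
  · rcases hh with ⟨q, b, hjq, ht, y, hy, rfl⟩ | hh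
    · exact weightFiltration_anti (by omega) (by omega)
        ((hM.mono (by omega)).commutator_two_pow_mem (by omega) (by omega) hx hy a b)
    · exact gamma_le_weightFiltration
        (commutator_le_right ⊤ _ (commutator_mem_commutator (mem_top _) hh))
  · exact gamma_le_weightFiltration
      (commutator_le_left _ ⊤ (commutator_mem_commutator hg (mem_top _)))

end CommutatorEstimate

theorem commutatorEstimate_zero (C : ℕ) : CommutatorEstimate G C 0 := by
  suffices ∀ d, CommutatorEstimate G C (C + 1 - d) by simpa using this (C + 1)
  intro d
  induction d with
  | zero => exact commutatorEstimate_succ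
  | succ d ih => exact (ih.mono (by omega)).of_succ

theorem commutator_weightFiltration_le {C s t i j : ℕ} (hi : 1 ≤ i) (hj : 1 ≤ j) :
    ⁅weightFiltration G C s i, weightFiltration G C t j⁆ ≤
      weightFiltration G C (s + t) (i + j) :=
  commutatorEstimate_zero C i j s t hi hj (Nat.zero_le _)

theorem sq_mem_weightFiltration {C t m : ℕ} (hm : 1 ≤ m) (ht : 1 ≤ t) {w : G}
    (hw : w ∈ weightFiltration G C t m) : w ^ 2 ∈ weightFiltration G C (t + 1) m :=
  ((commutatorEstimate_zero C).mono (Nat.zero_le _)).sq_mem hm ht hw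

theorem commutator_two_pow_mem_weightFiltration {C i j : ℕ} (hi : 1 ≤ i) (hj : 1 ≤ j) {x y : G}
    (hx : x ∈ gamma G i) (hy : y ∈ gamma G j) (a b : ℕ) :
    ⁅x ^ 2 ^ a, y ^ 2 ^ b⁆ ∈ weightFiltration G C (2 * i + 2 * j + a + b) (i + j) :=
  ((commutatorEstimate_zero C).mono (Nat.zero_le _)).commutator_two_pow_mem hi hj hx hy a b

end WeightFiltration

section Collection

variable {G : Type*} [Group G]

theorem mul_pow_two_pow_mem_weightFiltration {C m : ℕ} (hm : 1 ≤ m) {x y : G}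
    (hx : x ∈ gamma G m) (hy : y ∈ gamma G m) (e : ℕ) :
    (x ^ 2 ^ e * y ^ 2 ^ e)⁻¹ * (x * y) ^ 2 ^ e ∈
      weightFiltration G C (4 * m + e - 1) (2 * m) := by
  induction e with
  | zero => simp
  | succ e ih =>
    set A := x ^ 2 ^ e
    set B := y ^ 2 ^ e
    set c := (A * B)⁻¹ * (x * y) ^ 2 ^ e
    have hsq : ∀ g : G, g ^ 2 ^ (e + 1) = (g ^ 2 ^ e) ^ 2 := fun g => by rw [pow_succ, pow_mul]
    have hABc : A * B * c = (x * y) ^ 2 ^ e := mul_inv_cancel_left _ _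
    have hid : (A ^ 2 * B ^ 2)⁻¹ * (A * B * c) ^ 2 =
        (B⁻¹ * ⁅B⁻¹, A⁻¹⁆ * B) * (⁅(A * B)⁻¹, c⁆ * c ^ 2) := by
      simp only [pow_two, commutatorElement_def]; group
    rw [hsq, hsq, hsq, ← hABc, hid]
    refine mul_mem ?_ (mul_mem ?_ ?_)
    · have hBA : ⁅B⁻¹, A⁻¹⁆ ∈ weightFiltration G C (4 * m + e) (2 * m) := by
        simp only [A, B, ← inv_pow]
        exact weightFiltration_anti (by omega) (by omega)
          (commutator_two_pow_mem_weightFiltration hm hm (inv_mem hy) (inv_mem hx) e e)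
      simpa using (weightFiltration_normal C _ _).conj_mem _ hBA B⁻¹
    · have hAB : (A * B)⁻¹ ∈ weightFiltration G C 2 1 := by
        rw [weightFiltration_eq_top le_rfl]; exact mem_top _
      exact weightFiltration_anti (by omega) (by omega)
        (commutator_weightFiltration_le le_rfl (by omega) (commutator_mem_commutator hAB ih))
    · exact weightFiltration_anti (by omega) le_rfl
        (sq_mem_weightFiltration (by omega) (by omega) ih)

end Collection

section Nnk

variable {G : Type*} [Group G]

theorem pow_mem_Nnk {n k i : ℕ} (hki : k ≤ i) (hin : i ≤ n) {x : G} (hx : x ∈ gamma G i) :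
    x ^ 4 ^ (n - i) ∈ Nnk G n k :=
  mem_iSup_of_mem i (mem_iSup_of_mem (Finset.mem_Icc.2 ⟨hki, hin⟩) (pow_mem_sPow hx _))

theorem gamma_le_Nnk {n k : ℕ} (hkn : k ≤ n) : gamma G n ≤ Nnk G n k :=
  fun x hx => by simpa using pow_mem_Nnk hkn le_rfl hx

theorem Nnk_le_gamma (n k : ℕ) : Nnk G n k ≤ gamma G k :=
  iSup₂_le fun _ hi => sPow_le_iff.2 fun _ hx =>
    Subgroup.pow_mem _ (gamma_antitone (Finset.mem_Icc.1 hi).1 hx) _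

theorem Nnk_le_lambdaBar (n k : ℕ) : Nnk G n k ≤ lambdaBar G n :=
  iSup₂_le fun i hi => sPow_le_iff.2 fun _ hx => by
    simpa [Nat.add_sub_cancel' (Finset.mem_Icc.1 hi).2] using
      pow_four_pow_mem_lambdaBar (gamma_le_lambdaBar i hx) (n - i)

theorem Nnk_eq_sPow_sup {n k : ℕ} (hkn : k ≤ n) :
    Nnk G n k = sPow (gamma G k) (4 ^ (n - k)) ⊔ Nnk G n (k + 1) := by
  rw [Nnk, Nnk, ← Finset.insert_Icc_add_one_left_eq_Icc hkn, Finset.iSup_insert]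

theorem weightFiltration_le_Nnk {n k : ℕ} (hkn : k ≤ n) :
    weightFiltration G n (2 * n) k ≤ Nnk G n k := by
  rw [weightFiltration, closure_le]
  rintro _ (⟨i, e, hki, he, x, hx, rfl⟩ | hx)
  · rcases le_or_gt i n with hin | hni
    · have hexp : 2 ^ e = 2 ^ (e - 2 * (n - i)) * 4 ^ (n - i) := by
        rw [show (4 : ℕ) = 2 ^ 2 by norm_num, ← pow_mul, ← pow_add]
        congr 1; omega
      rw [hexp, pow_mul]
      exact pow_mem_Nnk hki hin (Subgroup.pow_mem _ hx _)
    · exact gamma_le_Nnk hkn (gamma_antitone hni.le (Subgroup.pow_mem _ hx _))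
  · exact gamma_le_Nnk hkn hx

theorem lambdaBar_le_weightFiltration (n : ℕ) :
    ∀ m, lambdaBar G m ≤ weightFiltration G n (2 * m) 1
  | 0 | 1 => (weightFiltration_eq_top (by omega)).ge
  | m + 2 => by
    refine sup_le (sPow_le_iff.2 fun w hw => ?_) ?_
    · have hw := lambdaBar_le_weightFiltration n (m + 1) hw
      rw [show w ^ 4 = (w ^ 2) ^ 2 by rw [← pow_mul]]
      have hw4 := sq_mem_weightFiltration le_rfl (by omega)
        (sq_mem_weightFiltration le_rfl (by omega) hw)
      exact weightFiltration_anti (by omega) le_rfl hw4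
    · calc ⁅lambdaBar G (m + 1), ⊤⁆
          ≤ ⁅weightFiltration G n (2 * (m + 1)) 1, weightFiltration G n 2 1⁆ :=
            commutator_mono (lambdaBar_le_weightFiltration n (m + 1))
              (weightFiltration_eq_top le_rfl).ge
        _ ≤ weightFiltration G n (2 * (m + 2)) 1 :=
            (commutator_weightFiltration_le le_rfl le_rfl).trans
              (weightFiltration_anti (by omega) (by omega))

theorem lambdaBar_le_Nnk_one {n : ℕ} (hn : 1 ≤ n) : lambdaBar G n ≤ Nnk G n 1 :=
  lambdaBar_le_weightFiltration n n |>.trans (weightFiltration_le_Nnk hn)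

theorem Nnk_inf_gamma_succ_le {n k : ℕ} (hk : 1 ≤ k) (hkn : k < n)
    (htf : Monoid.IsTorsionFree (G ⧸ gamma G (k + 1))) :
    Nnk G n k ⊓ gamma G (k + 1) ≤ Nnk G n (k + 1) := by
  set q := 4 ^ (n - k)
  have hcol : ∀ x ∈ gamma G k, ∀ y ∈ gamma G k,
      (x ^ q * y ^ q)⁻¹ * (x * y) ^ q ∈ Nnk G n (k + 1) := by
    intro x hx y hy
    have hq : q = 2 ^ (2 * (n - k)) := by simp only [q, pow_mul]; norm_num
    rw [hq]
    exact weightFiltration_le_Nnk hkn (weightFiltration_anti (by omega) (by omega)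
      (mul_pow_two_pow_mem_weightFiltration hk hx hy _))
  intro x hx
  obtain ⟨hxN, hxγ⟩ := mem_inf.1 hx
  rw [Nnk_eq_sPow_sup hkn.le, mem_sup_of_normal_right] at hxN
  obtain ⟨_, hy, z, hz, rfl⟩ := hxN
  obtain ⟨h, hh, z', hz', rfl⟩ := exists_pow_mul_of_mem_sPow hcol hy
  have hhq : h ^ q ∈ gamma G (k + 1) := by
    have hγ := Nnk_le_gamma (G := G) n (k + 1)
    simpa using mul_mem (mul_mem hxγ (inv_mem (hγ hz))) (inv_mem (hγ hz'))
  have hh' : h ∈ gamma G (k + 1) := mem_of_pow_mem_of_isTorsionFree htf (by positivity) hhq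
  have hpow : h ^ q ∈ Nnk G n (k + 1) := by
    rw [show q = 4 * 4 ^ (n - (k + 1)) by simp only [q, ← pow_succ']; congr 1; omega, pow_mul]
    exact pow_mem_Nnk le_rfl hkn (Subgroup.pow_mem _ hh' 4)
  exact mul_mem (mul_mem hpow hz') hz

theorem Nnk_one_inf_gamma_le {n k : ℕ} (hk : 1 ≤ k) (hkn : k ≤ n)
    (htf : ∀ j, 1 ≤ j → j ≤ n → Monoid.IsTorsionFree (G ⧸ gamma G j)) :
    Nnk G n 1 ⊓ gamma G k ≤ Nnk G n k := by
  induction k, hk using Nat.le_induction with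
  | base => exact inf_le_left
  | succ k hk ih =>
    calc Nnk G n 1 ⊓ gamma G (k + 1)
        ≤ Nnk G n k ⊓ gamma G (k + 1) :=
          le_inf ((inf_le_inf_left _ (gamma_antitone k.le_succ)).trans (ih (by omega)))
            inf_le_right
      _ ≤ Nnk G n (k + 1) := Nnk_inf_gamma_succ_le hk hkn (htf _ (by omega) hkn)

end Nnk

theorem stmt_5 (G : Type*) [Group G] (n k : ℕ) (hk : 1 ≤ k) (hkn : k ≤ n)
    (htf : ∀ j, 1 ≤ j → j ≤ n → Monoid.IsTorsionFree (G ⧸ gamma G j)) :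
    lambdaBar G n ⊓ gamma G k = Nnk G n k := by
  refine le_antisymm ?_ (le_inf (Nnk_le_lambdaBar n k) (Nnk_le_gamma n k))
  calc lambdaBar G n ⊓ gamma G k ≤ Nnk G n 1 ⊓ gamma G k :=
        inf_le_inf_right _ (lambdaBar_le_Nnk_one (hk.trans hkn))
    _ ≤ Nnk G n k := Nnk_one_inf_gamma_le hk hkn htf
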